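/- Gaussian regularization limit: let f : ℝ → ℝ be locally integrable on [0,∞) and suppose the improper integral converges, i.e. the partial integrals ∫₀^R f(x) dx tend to a limit I as R → ∞. Then for every t > 0 the integral ∫₀^∞ f(x) e^{-t x²} dx converges, and lim_{t→0⁺} ∫₀^∞ f(x) e^{-t x²} dx = I. -/

import Mathlib

/-! Let `F s = ∫₀ˢ f` and let `ρₜ s = 2ts e^{-ts²} = -∂ₛ e^{-ts²}`, the Rayleigh density of
scale `(2t)^{-1/2}`. Integration by parts (`F` is absolutely continuous) gives
`∫₀^R f(x) e^{-tx²} dx = F(R) e^{-tR²} + ∫₀^R F ρₜ`. Since `F` is continuous with a limit at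
infinity it is bounded, so as `R → ∞` the boundary term vanishes and the regularized integral
converges to `∫₀^∞ F ρₜ`. The substitution `s = u / √t` rewrites this as
`∫₀^∞ F(u / √t) ρ₁(u) du`, which tends to `I ∫₀^∞ ρ₁ = I` as `t → 0⁺` by dominated convergence. -/

open MeasureTheory Set Filter Topology

theorem intervalIntegral.integral_mul_eq_primitive_mul_sub {f g : ℝ → ℝ} {a b : ℝ}
    (hf : IntervalIntegrable f volume a b) (hg : ContDiffOn ℝ 1 g (uIcc a b)) :
    ∫ x in a..b, f x * g x
      = (∫ x in a..b, f x) * g b - ∫ x in a..b, (∫ y in a..x, f y) * deriv g x := by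
  have hF := hf.absolutelyContinuousOnInterval_intervalIntegral left_mem_uIcc
  have hfg : ∫ x in a..b, f x * g x = ∫ x in a..b, g x * deriv (fun x ↦ ∫ y in a..x, f y) x := by
    refine intervalIntegral.integral_congr_ae ?_
    filter_upwards [hf.ae_hasDerivAt_integral] with x hx hxab
    rw [(hx (uIoc_subset_uIcc hxab) a left_mem_uIcc).deriv, mul_comm]
  rw [hfg, hg.absolutelyContinuousOnInterval.integral_mul_deriv_eq_deriv_mul hF,
    intervalIntegral.integral_same, mul_zero, sub_zero, mul_comm]
  simp only [mul_comm (deriv g _)]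

lemma continuousOn_primitive_Ici {E : Type*} [NormedAddCommGroup E] [NormedSpace ℝ E]
    {f : ℝ → E} {a : ℝ} (hf : LocallyIntegrableOn f (Ici a)) :
    ContinuousOn (fun x ↦ ∫ y in a..x, f y) (Ici a) := by
  intro x hx
  have hax : a ≤ x + 1 := by linarith [mem_Ici.1 hx]
  have hcont := intervalIntegral.continuousOn_primitive_interval'
    (hf.integrableOn_compact_subset ((uIcc_of_le hax).subset.trans Icc_subset_Ici_self)
      isCompact_uIcc).intervalIntegrable
    left_mem_uIcc
  rw [uIcc_of_le hax] at hcont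
  refine (hcont x ⟨hx, by linarith⟩).mono_of_mem_nhdsWithin ?_
  rw [← Ici_inter_Iic]
  exact inter_mem_nhdsWithin _ (Iic_mem_nhds (by linarith))

lemma isBounded_image_Ici_of_tendsto {E : Type*} [PseudoMetricSpace E] {F : ℝ → E} {a : ℝ}
    {I : E} (hcont : ContinuousOn F (Ici a)) (hlim : Tendsto F atTop (𝓝 I)) :
    Bornology.IsBounded (F '' Ici a) := by
  obtain ⟨s, hs, hbdd⟩ := Metric.exists_isBounded_image_of_tendsto hlim
  obtain ⟨N, hN⟩ := mem_atTop_sets.1 hs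
  have hcompact := (isCompact_Icc (a := a) (b := N)).image_of_continuousOn
    (hcont.mono Icc_subset_Ici_self)
  have htail : F '' Ici N ⊆ F '' s := image_mono fun x hx ↦ hN x hx
  refine (hcompact.isBounded.union (hbdd.subset htail)).subset ?_
  rw [← image_union]
  refine image_mono fun x hx ↦ ?_
  rcases le_total x N with h | h
  exacts [Or.inl ⟨hx, h⟩, Or.inr h]

lemma tendsto_div_sqrt_nhdsGT_zero_atTop {u : ℝ} (hu : 0 < u) :
    Tendsto (fun t ↦ u / √t) (𝓝[>] 0) atTop := by
  have h := (Real.tendsto_sqrt_atTop.comp tendsto_inv_nhdsGT_zero).const_mul_atTop hu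
  simpa only [Function.comp_def, Real.sqrt_inv, div_eq_mul_inv] using h

noncomputable def rayleighDensity (t s : ℝ) : ℝ := 2 * t * s * Real.exp (-t * s ^ 2)

lemma hasDerivAt_neg_exp_neg_mul_sq (t s : ℝ) :
    HasDerivAt (fun s ↦ -Real.exp (-t * s ^ 2)) (rayleighDensity t s) s := by
  refine ((hasDerivAt_pow 2 s).const_mul (-t)).exp.neg.congr_deriv ?_
  rw [rayleighDensity]
  ring

lemma rayleighDensity_nonneg {t s : ℝ} (ht : 0 ≤ t) (hs : 0 ≤ s) : 0 ≤ rayleighDensity t s := by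
  unfold rayleighDensity
  positivity

lemma continuous_rayleighDensity (t : ℝ) : Continuous (rayleighDensity t) := by
  unfold rayleighDensity
  fun_prop

lemma tendsto_neg_exp_neg_mul_sq_atTop {t : ℝ} (ht : 0 < t) :
    Tendsto (fun s ↦ -Real.exp (-t * s ^ 2)) atTop (𝓝 0) := by
  rw [← neg_zero]
  refine (Real.tendsto_exp_atBot.comp ?_).neg
  simp only [neg_mul]
  exact tendsto_neg_atTop_atBot.comp ((tendsto_pow_atTop two_ne_zero).const_mul_atTop ht)

lemma integrableOn_rayleighDensity {t : ℝ} (ht : 0 < t) :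
    IntegrableOn (rayleighDensity t) (Ioi 0) :=
  integrableOn_Ioi_deriv_of_nonneg' (fun s _ ↦ hasDerivAt_neg_exp_neg_mul_sq t s)
    (fun _ hs ↦ rayleighDensity_nonneg ht.le (le_of_lt hs)) (tendsto_neg_exp_neg_mul_sq_atTop ht)

lemma integral_rayleighDensity {t : ℝ} (ht : 0 < t) :
    ∫ s in Ioi 0, rayleighDensity t s = 1 := by
  rw [integral_Ioi_of_hasDerivAt_of_tendsto' (fun s _ ↦ hasDerivAt_neg_exp_neg_mul_sq t s)
    (integrableOn_rayleighDensity ht) (tendsto_neg_exp_neg_mul_sq_atTop ht)]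
  simp

lemma rayleighDensity_eq_sqrt_mul {t : ℝ} (ht : 0 ≤ t) (s : ℝ) :
    rayleighDensity t s = √t * rayleighDensity 1 (√t * s) := by
  simp only [rayleighDensity, mul_pow, Real.sq_sqrt ht, neg_mul, one_mul]
  linear_combination (2 * s * Real.exp (-(t * s ^ 2))) * (Real.mul_self_sqrt ht).symm

lemma integrableOn_mul_rayleighDensity {F : ℝ → ℝ} {t : ℝ} (hcont : ContinuousOn F (Ioi 0))
    (hbdd : Bornology.IsBounded (F '' Ioi 0)) (ht : 0 < t) :
    IntegrableOn (fun s ↦ F s * rayleighDensity t s) (Ioi 0) := by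
  obtain ⟨M, hM⟩ := isBounded_iff_forall_norm_le.1 hbdd
  refine (integrableOn_rayleighDensity ht).bdd_mul (c := M)
    (hcont.aestronglyMeasurable measurableSet_Ioi) ?_
  filter_upwards [ae_restrict_mem measurableSet_Ioi] with s hs using hM _ (mem_image_of_mem F hs)

lemma integral_mul_exp_neg_mul_sq_eq {f : ℝ → ℝ} {R : ℝ} (hf : IntervalIntegrable f volume 0 R)
    (t : ℝ) :
    ∫ x in 0..R, f x * Real.exp (-t * x ^ 2)
      = (∫ x in 0..R, f x) * Real.exp (-t * R ^ 2)
        + ∫ s in 0..R, (∫ x in 0..s, f x) * rayleighDensity t s := by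
  have hderiv : deriv (fun s ↦ Real.exp (-t * s ^ 2)) = fun s ↦ -rayleighDensity t s :=
    funext fun s ↦ by simpa using (hasDerivAt_neg_exp_neg_mul_sq t s).neg.deriv
  rw [intervalIntegral.integral_mul_eq_primitive_mul_sub hf (by fun_prop), hderiv]
  simp only [mul_neg, intervalIntegral.integral_neg, sub_neg_eq_add]

theorem tendsto_integral_mul_exp_neg_mul_sq {f : ℝ → ℝ} {t : ℝ}
    (hf : LocallyIntegrableOn f (Ici 0))
    (hbdd : Bornology.IsBounded ((fun s ↦ ∫ x in 0..s, f x) '' Ioi 0)) (ht : 0 < t) :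
    Tendsto (fun R ↦ ∫ x in 0..R, f x * Real.exp (-t * x ^ 2)) atTop
      (𝓝 (∫ s in Ioi 0, (∫ x in 0..s, f x) * rayleighDensity t s)) := by
  obtain ⟨M, hM⟩ := isBounded_iff_forall_norm_le.1 hbdd
  have hboundary : Tendsto (fun R ↦ (∫ x in 0..R, f x) * Real.exp (-t * R ^ 2)) atTop (𝓝 0) := by
    refine bdd_le_mul_tendsto_zero' M ?_ (by simpa using (tendsto_neg_exp_neg_mul_sq_atTop ht).neg)
    filter_upwards [eventually_gt_atTop 0] with R hR using hM _ (mem_image_of_mem _ hR)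
  have hbulk := intervalIntegral_tendsto_integral_Ioi 0 (integrableOn_mul_rayleighDensity
    ((continuousOn_primitive_Ici hf).mono Ioi_subset_Ici_self) hbdd ht) tendsto_id
  have hsum := hboundary.add hbulk
  rw [zero_add] at hsum
  refine hsum.congr' ?_
  filter_upwards [eventually_ge_atTop 0] with R hR
  refine (integral_mul_exp_neg_mul_sq_eq ?_ t).symm
  exact (hf.integrableOn_compact_subset ((uIcc_of_le hR).subset.trans Icc_subset_Ici_self)
    isCompact_uIcc).intervalIntegrable

theorem tendsto_setIntegral_mul_rayleighDensity {F : ℝ → ℝ} {I : ℝ}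
    (hcont : ContinuousOn F (Ioi 0)) (hbdd : Bornology.IsBounded (F '' Ioi 0))
    (hlim : Tendsto F atTop (𝓝 I)) :
    Tendsto (fun t ↦ ∫ s in Ioi 0, F s * rayleighDensity t s) (𝓝[>] 0) (𝓝 I) := by
  have hsubst : ∀ t ∈ Ioi (0 : ℝ),
      ∫ u in Ioi 0, F (u / √t) * rayleighDensity 1 u = ∫ s in Ioi 0, F s * rayleighDensity t s := by
    intro t ht
    have hc : 0 < √t := Real.sqrt_pos.2 ht
    have h := integral_comp_mul_left_Ioi' (fun u ↦ F (u / √t) * rayleighDensity 1 u) 0 hc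
    rw [mul_zero] at h
    rw [← h, smul_eq_mul, ← integral_const_mul]
    refine setIntegral_congr_fun measurableSet_Ioi fun s _ ↦ ?_
    rw [rayleighDensity_eq_sqrt_mul (le_of_lt ht), mul_div_cancel_left₀ _ hc.ne']
    ring
  obtain ⟨M, hM⟩ := isBounded_iff_forall_norm_le.1 hbdd
  have hdom : Tendsto (fun t ↦ ∫ u in Ioi 0, F (u / √t) * rayleighDensity 1 u) (𝓝[>] 0)
      (𝓝 (∫ u in Ioi 0, I * rayleighDensity 1 u)) := by
    refine tendsto_integral_filter_of_dominated_convergence (fun u ↦ M * rayleighDensity 1 u)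
      (eventually_mem_nhdsWithin.mono fun t ht ↦ ?_) (eventually_mem_nhdsWithin.mono fun t ht ↦ ?_)
      ((integrableOn_rayleighDensity one_pos).const_mul M) ?_
    · have hc : 0 < √t := Real.sqrt_pos.2 ht
      refine ContinuousOn.aestronglyMeasurable ?_ measurableSet_Ioi
      exact (hcont.comp (continuousOn_id.div_const _) fun u hu ↦ div_pos hu hc).mul
        (continuous_rayleighDensity 1).continuousOn
    · filter_upwards [ae_restrict_mem measurableSet_Ioi] with u hu
      have hρ := rayleighDensity_nonneg zero_le_one (le_of_lt hu)
      rw [norm_mul, Real.norm_of_nonneg hρ]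
      exact mul_le_mul_of_nonneg_right
        (hM _ (mem_image_of_mem F (div_pos hu (Real.sqrt_pos.2 ht)))) hρ
    · filter_upwards [ae_restrict_mem measurableSet_Ioi] with u hu
      exact (hlim.comp (tendsto_div_sqrt_nhdsGT_zero_atTop hu)).mul_const _
  rw [integral_const_mul, integral_rayleighDensity one_pos, mul_one] at hdom
  exact hdom.congr' (eventually_nhdsWithin_of_forall hsubst)

/-- Gaussian regularization limit: if `f : ℝ → ℝ` is locally integrable on `[0,∞)`
and the partial integrals `∫₀^R f` converge to `I` as `R → ∞`, then for every
`t > 0` the improper integral `∫₀^∞ f x * exp (-t x²) dx` converges, and its value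
`g t` tends to `I` as `t → 0⁺`. -/
theorem gaussian_regularization_limit
    (f : ℝ → ℝ) (I : ℝ)
    (hloc : LocallyIntegrableOn f (Set.Ici (0 : ℝ)))
    (hconv : Tendsto (fun R : ℝ => ∫ x in (0 : ℝ)..R, f x) atTop (𝓝 I)) :
    (∀ t : ℝ, 0 < t → ∃ J : ℝ,
        Tendsto (fun R : ℝ => ∫ x in (0 : ℝ)..R, f x * Real.exp (-t * x ^ 2)) atTop (𝓝 J)) ∧
    ∀ g : ℝ → ℝ,
      (∀ t : ℝ, 0 < t →
        Tendsto (fun R : ℝ => ∫ x in (0 : ℝ)..R, f x * Real.exp (-t * x ^ 2)) atTop (𝓝 (g t))) →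
      Tendsto g (𝓝[>] (0 : ℝ)) (𝓝 I) := by
  have hcont := continuousOn_primitive_Ici hloc
  have hbdd := (isBounded_image_Ici_of_tendsto hcont hconv).subset (image_mono Ioi_subset_Ici_self)
  have hJ := fun t (ht : 0 < t) ↦ tendsto_integral_mul_exp_neg_mul_sq hloc hbdd ht
  refine ⟨fun t ht ↦ ⟨_, hJ t ht⟩, fun g hg ↦ ?_⟩
  refine (tendsto_setIntegral_mul_rayleighDensity (hcont.mono Ioi_subset_Ici_self) hbdd
    hconv).congr' ?_
  filter_upwards [self_mem_nhdsWithin] with t ht using tendsto_nhds_unique (hJ t ht) (hg t ht)
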